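/- arXiv:2009.10118 — 2 statements merged into one kernel-verified Lean document; each statement's English description precedes it below -/
import Mathlib

section
/- For every n ≥ 2 and every j ∈ ℕ₀, the coefficient c_j^{(n)} of the polynomial (1+z)(1+2z)···(1+(n−1)z) satisfies c_j^{(n)} ≤ n!/2. -/
/-! Since `c_j^{(n+1)} = n c_{j-1}^{(n)} + c_j^{(n)}`, a uniform bound `B` on the coefficients of
`p_n` gives the bound `(n + 1) B` for `p_{n+1}`; starting from `p_2 = 1 + z`, whose coefficients
are at most `1 = 2!/2`, this yields `n!/2`. -/

open Finset

/-- The polynomial `p_n(z) = (1+z)(1+2z)···(1+(n-1)z)`. -/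
noncomputable def p (n : ℕ) : Polynomial ℚ :=
  ∏ k ∈ Finset.Icc 1 (n - 1), (Polynomial.C (k : ℚ) * Polynomial.X + 1)

open Polynomial

namespace Polynomial

variable {R : Type*} [Semiring R]

theorem coeff_mul_C_mul_X_add_one_zero (q : R[X]) (a : R) :
    (q * (C a * X + 1)).coeff 0 = q.coeff 0 := by
  simp [mul_add, ← mul_assoc]

theorem coeff_mul_C_mul_X_add_one_succ (q : R[X]) (a : R) (i : ℕ) :
    (q * (C a * X + 1)).coeff (i + 1) = q.coeff i * a + q.coeff (i + 1) := by
  rw [mul_add, mul_one, coeff_add, ← mul_assoc, coeff_mul_X, coeff_mul_C]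

theorem coeff_mul_C_mul_X_add_one_le [PartialOrder R] [IsOrderedRing R] {q : R[X]} {a B : R}
    (ha : 0 ≤ a) (hq : ∀ i, q.coeff i ≤ B) (j : ℕ) :
    (q * (C a * X + 1)).coeff j ≤ B * (a + 1) := by
  have hB : 0 ≤ B := by
    simpa [coeff_eq_zero_of_natDegree_lt (Nat.lt_succ_self _)] using hq (q.natDegree + 1)
  rw [mul_add_one B a]
  rcases j with _ | i
  · rw [coeff_mul_C_mul_X_add_one_zero]
    exact le_add_of_nonneg_of_le (mul_nonneg hB ha) (hq 0)
  · rw [coeff_mul_C_mul_X_add_one_succ]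
    exact add_le_add (mul_le_mul_of_nonneg_right (hq i) ha) (hq (i + 1))

end Polynomial

theorem p_succ (n : ℕ) : p (n + 1) = p n * (C (n : ℚ) * X + 1) := by
  rcases n with _ | m
  · simp [p]
  · simp only [p, Nat.add_sub_cancel]
    rw [prod_Icc_succ_top (by omega)]

theorem p_two : p 2 = X + 1 := by
  simp [p]

/-- For `n ≥ 2`, every coefficient of `p_n` is at most `n!/2`. -/
theorem coeff_p_le_half_factorial (n : ℕ) (hn : 2 ≤ n) (j : ℕ) :
    (p n).coeff j ≤ (Nat.factorial n : ℚ) / 2 := by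
  induction n, hn using Nat.le_induction generalizing j with
  | base =>
    rw [p_two]
    rcases j with _ | _ | j <;> simp [coeff_X, coeff_one, Nat.factorial]
  | succ n _ ih =>
    have hfac : ((n + 1).factorial : ℚ) / 2 = (n.factorial / 2) * (n + 1) := by
      push_cast [Nat.factorial_succ]
      ring
    rw [p_succ, hfac]
    exact coeff_mul_C_mul_X_add_one_le n.cast_nonneg ih j
end

section
/- Let ξ_j^{(n)} be the coefficient of z^j in (1+2z)(1+3z)···(1+(n−1)z), and let h(n) := Σ_{j=3}^{n} 1/j. Then for every n ≥ 3, Σ_{j=0}^{n−3} ξ_j^{(n)} · (n−2−j) = (n!/2) · h(n). -/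
/-! Since `deg q_n ≤ d := n - 2`, the weighted sum is `d · q_n(1) - q_n'(1)`. Logarithmic
differentiation of the product gives `q_n'(1) = q_n(1) · Σ_{k=2}^{n-1} k/(k+1)`, so the sum is
`q_n(1) · Σ_{k=2}^{n-1} (1 - k/(k+1)) = (n!/2) · Σ_{k=3}^{n} 1/k`. -/

open Finset Polynomial

noncomputable def q (n : ℕ) : Polynomial ℚ :=
  ∏ k ∈ Finset.Icc 2 (n - 1), (Polynomial.C (k : ℚ) * Polynomial.X + 1)

noncomputable def h (n : ℕ) : ℚ := ∑ j ∈ Finset.Icc 3 n, (1 : ℚ) / j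

namespace Polynomial

theorem sum_range_coeff_mul_sub_eq {R : Type*} [CommRing R] {p : R[X]} {d : ℕ}
    (hp : p.natDegree ≤ d) :
    ∑ j ∈ range d, p.coeff j * ((d : R) - j) = d * p.eval 1 - p.derivative.eval 1 := by
  have h_eval : p.eval 1 = ∑ j ∈ range (d + 1), p.coeff j := by
    simp [eval_eq_sum_range' (Nat.lt_succ_of_le hp)]
  have h_deriv : p.derivative.eval 1 = ∑ j ∈ range (d + 1), p.coeff j * j := by
    rw [derivative_eval, sum_over_range' _ (by simp) _ (Nat.lt_succ_of_le hp)]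
    simp
  rw [h_eval, h_deriv, mul_sum, ← sum_sub_distrib, sum_range_succ,
    sub_eq_zero_of_eq (mul_comm _ _), add_zero]
  exact sum_congr rfl fun j _ => by ring

theorem eval_derivative_prod_eq_mul_sum_div {K ι : Type*} [Field K] {s : Finset ι}
    {f : ι → K[X]} {x : K} (hf : ∀ i ∈ s, (f i).eval x ≠ 0) :
    (∏ i ∈ s, f i).derivative.eval x =
      (∏ i ∈ s, f i).eval x * ∑ i ∈ s, (f i).derivative.eval x / (f i).eval x := by
  classical
  rw [derivative_prod_finset, eval_finsetSum, mul_sum]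
  refine sum_congr rfl fun i hi => ?_
  rw [eval_mul, eval_prod, eval_prod, ← prod_erase_mul _ _ hi]
  field_simp [hf i hi]

end Polynomial

theorem prod_Icc_two_pred_add_one (n : ℕ) (hn : 2 ≤ n) :
    ∏ k ∈ Icc 2 (n - 1), ((k : ℚ) + 1) = Nat.factorial n / 2 := by
  induction n, hn using Nat.le_induction with
  | base => simp [Nat.factorial]
  | succ m hm ih =>
    rw [show m + 1 - 1 = m - 1 + 1 by omega, prod_Icc_succ_top (by omega), ih,
      Nat.sub_add_cancel (by omega), Nat.factorial_succ]
    push_cast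
    ring

theorem sum_Icc_two_pred_one_div_add_one (n : ℕ) (hn : 1 ≤ n) :
    ∑ k ∈ Icc 2 (n - 1), 1 / ((k : ℚ) + 1) = h n := by
  rw [h, ← Nat.sub_add_cancel hn, ← map_add_right_Icc 2 (n - 1) 1, sum_map]
  simp

theorem card_Icc_two_pred (n : ℕ) : #(Icc 2 (n - 1)) = n - 2 := by
  rw [Nat.card_Icc]
  omega

theorem natDegree_q_le (n : ℕ) : (q n).natDegree ≤ n - 2 := by
  refine (natDegree_prod_le _ _).trans ((sum_le_card_nsmul _ _ 1 fun k _ => ?_).trans_eq ?_)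
  · simpa using natDegree_linear_le (a := (k : ℚ)) (b := 1)
  · rw [card_Icc_two_pred, smul_eq_mul, mul_one]

theorem eval_one_q (n : ℕ) : (q n).eval 1 = ∏ k ∈ Icc 2 (n - 1), ((k : ℚ) + 1) := by
  simp [q, eval_prod]

theorem eval_one_derivative_q (n : ℕ) :
    (q n).derivative.eval 1 = (q n).eval 1 * ∑ k ∈ Icc 2 (n - 1), (k : ℚ) / (k + 1) := by
  rw [q, eval_derivative_prod_eq_mul_sum_div fun k _ => by
    rw [eval_add, eval_one, eval_mul, eval_C, eval_X, mul_one]; positivity]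
  simp

/-- For `n ≥ 3`, `Σ_{j=0}^{n-3} ξ_j^{(n)}·(n-2-j) = (n!/2)·h(n)`. -/
theorem weighted_sum_coeff_q (n : ℕ) (hn : 3 ≤ n) :
    ∑ j ∈ Finset.range (n - 2), (q n).coeff j * ((n : ℚ) - 2 - j) =
      ((Nat.factorial n : ℚ) / 2) * h n := by
  have h_cast : (n : ℚ) - 2 = ((n - 2 : ℕ) : ℚ) := by
    rw [Nat.cast_sub (by omega), Nat.cast_ofNat]
  have h_card : ((n - 2 : ℕ) : ℚ) = ∑ _k ∈ Icc 2 (n - 1), (1 : ℚ) := by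
    rw [sum_const, card_Icc_two_pred, nsmul_one]
  rw [h_cast, sum_range_coeff_mul_sub_eq (natDegree_q_le n), eval_one_derivative_q, eval_one_q,
    prod_Icc_two_pred_add_one n (by omega), ← sum_Icc_two_pred_one_div_add_one n (by omega),
    h_card, mul_comm, ← mul_sub, ← sum_sub_distrib]
  congr 1
  refine sum_congr rfl fun k _ => ?_
  field_simp
  ring
end
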